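/- Let K ∈ B(H) have closed range with pseudo-inverse K† satisfying ‖K‖‖K†‖ = 1. Then for every f in the range R(K), ‖K*f‖ = ‖K‖‖f‖; consequently, given any finite set F of vectors in R(K) of norm ‖K‖, there is a tight K-frame for R(K) consisting of vectors of norm ‖K‖ that contains F. -/

import Mathlib

/-!
For `f = K K† f` we have `‖f‖² = ⟪K* f, K† f⟫ ≤ ‖K* f‖ ‖K†‖ ‖f‖`, and `‖K†‖ = 1 / ‖K‖` turns this
into `‖K‖ ‖f‖ ≤ ‖K* f‖`, the reverse of the trivial bound. Hence on `R(K)` the frame condition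
`∑ |⟪g, f⟫|² = A ‖K* f‖²` just says that `{g}` is a tight frame for the Hilbert space `R(K)`: take,
for each `F i`, the vectors `‖K‖ e` with `e` running through a Hilbert basis of `R(K)` containing
`F i / ‖K‖`; the union of these `M` families has bound `M ‖K‖² ‖f‖² = M ‖K* f‖²`.
-/

open scoped InnerProductSpace ComplexInnerProductSpace
open ContinuousLinearMap TopologicalSpace

section Adjoint

variable {𝕜 E F : Type*} [RCLike 𝕜] [NormedAddCommGroup E] [InnerProductSpace 𝕜 E] [CompleteSpace E]
  [NormedAddCommGroup F] [InnerProductSpace 𝕜 F] [CompleteSpace F]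

theorem norm_sq_le_norm_adjoint_apply_mul {K : E →L[𝕜] F} {L : F →L[𝕜] E} {x : F}
    (hx : K (L x) = x) : ‖x‖ ^ 2 ≤ ‖adjoint K x‖ * ‖L x‖ :=
  calc ‖x‖ ^ 2 = RCLike.re ⟪adjoint K x, L x⟫_𝕜 := by
        rw [adjoint_inner_left, hx, inner_self_eq_norm_sq]
    _ ≤ ‖⟪adjoint K x, L x⟫_𝕜‖ := RCLike.re_le_norm _
    _ ≤ ‖adjoint K x‖ * ‖L x‖ := norm_inner_le_norm _ _

theorem norm_adjoint_apply_eq_of_mem_range {K : E →L[𝕜] F} {L : F →L[𝕜] E}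
    (hKL : ∀ x ∈ Set.range K, K (L x) = x) (hnorm : ‖K‖ * ‖L‖ = 1) {x : F}
    (hx : x ∈ Set.range K) : ‖adjoint K x‖ = ‖K‖ * ‖x‖ := by
  refine le_antisymm (by simpa using (adjoint K).le_opNorm x) ?_
  rcases (norm_nonneg x).eq_or_lt with hx0 | hx0
  · simp [← hx0]
  have hsq : ‖x‖ * ‖x‖ ≤ ‖adjoint K x‖ * ‖L‖ * ‖x‖ :=
    calc ‖x‖ * ‖x‖ = ‖x‖ ^ 2 := by ring
      _ ≤ ‖adjoint K x‖ * ‖L x‖ := norm_sq_le_norm_adjoint_apply_mul (hKL x hx)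
      _ ≤ ‖adjoint K x‖ * ‖L‖ * ‖x‖ := by
        rw [mul_assoc]; gcongr; exact L.le_opNorm x
  have hle : ‖x‖ ≤ ‖adjoint K x‖ * ‖L‖ := le_of_mul_le_mul_right hsq hx0
  calc ‖K‖ * ‖x‖ ≤ ‖K‖ * (‖adjoint K x‖ * ‖L‖) := by gcongr
    _ = ‖adjoint K x‖ := by rw [mul_left_comm, hnorm, mul_one]

end Adjoint

section Frames

variable {𝕜 E : Type*} [RCLike 𝕜] [NormedAddCommGroup E] [InnerProductSpace 𝕜 E]

theorem HilbertBasis.hasSum_norm_inner_sq {ι : Type*} (b : HilbertBasis ι 𝕜 E) (x : E) :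
    HasSum (fun i => ‖⟪b i, x⟫_𝕜‖ ^ 2) (‖x‖ ^ 2) := by
  simpa [b.repr_apply_apply, b.repr.norm_map] using
    lp.hasSum_norm (p := 2) (by norm_num) (b.repr x)

theorem Orthonormal.countable [SeparableSpace E] {ι : Type*} {v : ι → E}
    (hv : Orthonormal 𝕜 v) : Countable ι := by
  refine Pairwise.countable_of_isOpen_disjoint (s := fun i => Metric.ball (v i) (1 / 2))
    (fun i j hij => Metric.ball_disjoint_ball ?_) (fun _ => Metric.isOpen_ball)
    (fun i => ⟨v i, Metric.mem_ball_self (by norm_num)⟩)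
  have hdist : dist (v i) (v j) ^ 2 = 2 := by
    rw [dist_eq_norm, @norm_sub_sq 𝕜, hv.inner_eq_zero hij, hv.norm_eq_one, hv.norm_eq_one]
    norm_num
  nlinarith [dist_nonneg (x := v i) (y := v j)]

theorem hasSum_sigma_of_nonneg {β : Type*} [Fintype β] {γ : β → Type*}
    {f : (Σ b, γ b) → ℝ} {g : β → ℝ} (hf0 : ∀ p, 0 ≤ f p)
    (hf : ∀ b, HasSum (fun c => f ⟨b, c⟩) (g b)) : HasSum f (∑ b, g b) :=
  (hasSum_fintype g).sigma_of_hasSum hf <|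
    (summable_sigma_of_nonneg hf0).2 ⟨fun b => (hf b).summable, .of_finite⟩

/-- The frame is a Hilbert basis of `W` through `u`; separability lets it be indexed in `Type`. -/
theorem Submodule.exists_parseval_frame_mem_of_norm_eq_one [SeparableSpace E] (W : Submodule 𝕜 E)
    [CompleteSpace W] {u : E} (hu : u ∈ W) (hu1 : ‖u‖ = 1) :
    ∃ (ι : Type) (v : ι → E), (∀ j, v j ∈ W) ∧ (∀ j, ‖v j‖ = 1) ∧
      (∀ x ∈ W, HasSum (fun j => ‖⟪v j, x⟫_𝕜‖ ^ 2) (‖x‖ ^ 2)) ∧ u ∈ Set.range v := by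
  have hs : Orthonormal 𝕜 ((↑) : ({⟨u, hu⟩} : Set W) → W) :=
    orthonormal_subsingleton_iff.2 fun ⟨_, h⟩ => by simp [Set.mem_singleton_iff.1 h, hu1]
  obtain ⟨w, b, hsw, hb⟩ := hs.exists_hilbertBasis_extension
  have : Countable w := b.orthonormal.countable
  let e := equivShrink.{0} w
  refine ⟨Shrink.{0} w, fun j => b (e.symm j), fun j => (b _).2,
    fun j => b.orthonormal.norm_eq_one _, fun x hx => ?_, ⟨e ⟨_, hsw rfl⟩, by simp [hb]⟩⟩
  simpa [Function.comp_def] using e.symm.hasSum_iff.2 (b.hasSum_norm_inner_sq ⟨x, hx⟩)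

theorem Submodule.exists_tight_frame_superset [SeparableSpace E] (W : Submodule 𝕜 E)
    [CompleteSpace W] {ι : Type} [Fintype ι] {c : ℝ} (hc : 0 < c) {F : ι → E}
    (hFW : ∀ i, F i ∈ W) (hFn : ∀ i, ‖F i‖ = c) :
    ∃ (J : Type) (g : J → E), (∀ j, g j ∈ W) ∧ (∀ j, ‖g j‖ = c) ∧
      (∀ x ∈ W, HasSum (fun j => ‖⟪g j, x⟫_𝕜‖ ^ 2) (Fintype.card ι * c ^ 2 * ‖x‖ ^ 2)) ∧
      ∀ i, F i ∈ Set.range g := by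
  have hu1 : ∀ i, ‖(c⁻¹ : 𝕜) • F i‖ = 1 := fun i => by
    rw [norm_smul, hFn, norm_inv, RCLike.norm_ofReal, abs_of_pos hc, inv_mul_cancel₀ hc.ne']
  choose κ v hvW hvn hvsum hvF using fun i =>
    W.exists_parseval_frame_mem_of_norm_eq_one (W.smul_mem _ (hFW i)) (hu1 i)
  refine ⟨Σ i, κ i, fun p => (c : 𝕜) • v p.1 p.2, fun p => W.smul_mem _ (hvW _ _),
    fun p => by simp [norm_smul, hvn, hc.le], fun x hx => ?_, fun i => ?_⟩
  · have hfib : ∀ i, HasSum (fun j => ‖⟪(c : 𝕜) • v i j, x⟫_𝕜‖ ^ 2) (c ^ 2 * ‖x‖ ^ 2) :=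
      fun i => by simpa [inner_smul_left, mul_pow] using (hvsum i x hx).mul_left (c ^ 2)
    convert hasSum_sigma_of_nonneg (f := fun p => ‖⟪(c : 𝕜) • v p.1 p.2, x⟫_𝕜‖ ^ 2)
      (fun _ => by positivity) hfib using 1
    simp [mul_assoc]
  · obtain ⟨j, hj⟩ := hvF i
    exact ⟨⟨i, j⟩, by simp [hj, smul_smul, hc.ne']⟩

end Frames

theorem stmt_5_general {H : Type*} [NormedAddCommGroup H] [InnerProductSpace ℂ H] [CompleteSpace H]
    [TopologicalSpace.SeparableSpace H]
    (K Kd : H →L[ℂ] H)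
    (hclosed : IsClosed (Set.range K))
    (hKd : ∀ x ∈ Set.range K, K (Kd x) = x)
    (hnorm : ‖K‖ * ‖Kd‖ = 1) :
    (∀ x ∈ Set.range K, ‖ContinuousLinearMap.adjoint K x‖ = ‖K‖ * ‖x‖) ∧
      ∀ (M : ℕ), 0 < M → ∀ F : Fin M → H, (∀ i, F i ∈ Set.range K) →
        (∀ i, ‖F i‖ = ‖K‖) →
        ∃ (J : Type) (g : J → H),
          (∀ j, g j ∈ Set.range K) ∧
          (∀ j, ‖g j‖ = ‖K‖) ∧
          (∃ A : ℝ, 0 < A ∧ ∀ x ∈ Set.range K,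
            HasSum (fun j => ‖⟪g j, x⟫‖ ^ 2)
              (A * ‖ContinuousLinearMap.adjoint K x‖ ^ 2)) ∧
          (∀ i, ∃ j, g j = F i) := by
  have hadj : ∀ x ∈ Set.range K, ‖adjoint K x‖ = ‖K‖ * ‖x‖ := fun x hx =>
    norm_adjoint_apply_eq_of_mem_range hKd hnorm hx
  refine ⟨hadj, fun M hM F hF hFn => ?_⟩
  have hKpos : 0 < ‖K‖ := (norm_nonneg K).lt_of_ne' (left_ne_zero_of_mul_eq_one hnorm)
  let W := LinearMap.range (K : H →ₗ[ℂ] H)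
  have : CompleteSpace W := (show IsClosed (W : Set H) from hclosed).completeSpace_coe
  obtain ⟨J, g, hgW, hgn, hgsum, hFg⟩ := W.exists_tight_frame_superset hKpos hF hFn
  refine ⟨J, g, hgW, hgn, ⟨M, Nat.cast_pos.2 hM, fun x hx => ?_⟩, hFg⟩
  rw [hadj x hx, mul_pow, ← mul_assoc]
  simpa using hgsum x hx

/-- If `K` has closed range and its pseudo-inverse `K†` satisfies `‖K‖ ‖K†‖ = 1`, then
`‖K* f‖ = ‖K‖ ‖f‖` for all `f ∈ R(K)`; consequently any finite set of vectors of `R(K)`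
of norm `‖K‖` extends to a tight `K`-frame for `R(K)` consisting of vectors of norm `‖K‖`. -/
theorem stmt_5 {H : Type*} [NormedAddCommGroup H] [InnerProductSpace ℂ H] [CompleteSpace H]
    [TopologicalSpace.SeparableSpace H]
    (K Kd : H →L[ℂ] H) (hK : K ≠ 0)
    (hclosed : IsClosed (Set.range K))
    (hKd : ∀ x ∈ Set.range K, K (Kd x) = x)
    (hnorm : ‖K‖ * ‖Kd‖ = 1) :
    (∀ x ∈ Set.range K, ‖ContinuousLinearMap.adjoint K x‖ = ‖K‖ * ‖x‖) ∧
      ∀ (M : ℕ), 0 < M → ∀ F : Fin M → H, (∀ i, F i ∈ Set.range K) →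
        (∀ i, ‖F i‖ = ‖K‖) →
        ∃ (J : Type) (g : J → H),
          (∀ j, g j ∈ Set.range K) ∧
          (∀ j, ‖g j‖ = ‖K‖) ∧
          (∃ A : ℝ, 0 < A ∧ ∀ x ∈ Set.range K,
            HasSum (fun j => ‖⟪g j, x⟫‖ ^ 2)
              (A * ‖ContinuousLinearMap.adjoint K x‖ ^ 2)) ∧
          (∀ i, ∃ j, g j = F i) :=
  stmt_5_general K Kd hclosed hKd hnorm
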